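/- arXiv:2602.14858 — 2 statements merged into one kernel-verified Lean document; each statement's English description precedes it below -/
import Mathlib

section
/- For a prior probability density q₀ on a measure space Y and a measurable function f : Y → ℝ with ∫ q₀(y) exp(β f(y)) dy < ∞ for some β > 0, the log-partition satisfies (1/β) log ∫ q₀(y) exp(β f(y)) dy = sup over probability densities q of [∫ q(y) f(y) dy − (1/β) KL(q‖q₀)], and the supremum is attained at the Gibbs density q*(y) = q₀(y) exp(β f(y)) / ∫ q₀(s) exp(β f(s)) ds. -/
open MeasureTheory Real

/-- Kullback–Leibler divergence between probability densities `q` and `q₀`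
with respect to a reference measure `μ`. -/
noncomputable def KLdiv {Y : Type*} [MeasurableSpace Y] (μ : Measure Y)
    (q q₀ : Y → ℝ) : ℝ :=
  ∫ y, q y * Real.log (q y / q₀ y) ∂μ

lemma gibbs_point_ineq {q p : ℝ} (hq : 0 ≤ q) (hp : 0 < p) :
    q - p ≤ q * Real.log (q / p) := by
  rcases eq_or_lt_of_le hq with h | h
  · rw [← h]; simp <;> linarith
  · have h1 : Real.log (p / q) ≤ p / q - 1 :=
      Real.log_le_sub_one_of_pos (by positivity)
    have h2 : Real.log (q / p) = - Real.log (p / q) := by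
      rw [← Real.log_inv, inv_div]
    have h3 : q * Real.log (p / q) ≤ q * (p / q - 1) :=
      mul_le_mul_of_nonneg_left h1 h.le
    have h4 : q * (p / q - 1) = p - q := by field_simp
    rw [h4] at h3
    rw [h2]; linarith

/-- Gibbs variational formula: the log-partition function equals the supremum
of expected payoff minus KL information cost over probability densities, and
the supremum is attained at the Gibbs density. -/
theorem gibbs_variational_max
    {Y : Type*} [MeasurableSpace Y] (μ : Measure Y)
    (q₀ f : Y → ℝ) (β : ℝ) (hβ : 0 < β)
    (hq₀pos : ∀ y, 0 < q₀ y)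
    (hq₀int : Integrable q₀ μ)
    (hq₀one : ∫ y, q₀ y ∂μ = 1)
    (hf : Measurable f)
    (hZ : Integrable (fun y => q₀ y * Real.exp (β * f y)) μ)
    (hstarf : Integrable (fun y =>
      (q₀ y * Real.exp (β * f y) / ∫ s, q₀ s * Real.exp (β * f s) ∂μ) * f y) μ) :
    (∀ q : Y → ℝ, (∀ y, 0 ≤ q y) → (∫ y, q y ∂μ = 1) →
        Integrable q μ →
        Integrable (fun y => q y * f y) μ →
        Integrable (fun y => q y * Real.log (q y / q₀ y)) μ →
        (∫ y, q y * f y ∂μ) - (1 / β) * KLdiv μ q q₀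
          ≤ (1 / β) * Real.log (∫ y, q₀ y * Real.exp (β * f y) ∂μ))
    ∧
    ((∫ y, (q₀ y * Real.exp (β * f y) / ∫ s, q₀ s * Real.exp (β * f s) ∂μ) * f y ∂μ)
        - (1 / β) * KLdiv μ
            (fun y => q₀ y * Real.exp (β * f y) / ∫ s, q₀ s * Real.exp (β * f s) ∂μ) q₀
      = (1 / β) * Real.log (∫ y, q₀ y * Real.exp (β * f y) ∂μ)) := by
  set Z : ℝ := ∫ s, q₀ s * Real.exp (β * f s) ∂μ with hZdef
  have hμne : μ ≠ 0 := by
    intro h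
    rw [h] at hq₀one
    simp at hq₀one
  have hZpos : 0 < Z := by
    rw [hZdef, MeasureTheory.integral_pos_iff_support_of_nonneg
      (fun y => by have := hq₀pos y; positivity) hZ]
    have hsupp : Function.support (fun y => q₀ y * Real.exp (β * f y)) = Set.univ := by
      ext y; simp only [Function.mem_support, Set.mem_univ, iff_true]
      have := hq₀pos y; positivity
    rw [hsupp]
    simpa [Measure.measure_univ_pos] using hμne
  have hqstar_int : Integrable (fun y => q₀ y * Real.exp (β * f y) / Z) μ :=
    hZ.div_const Z
  have hqstar_one : ∫ y, q₀ y * Real.exp (β * f y) / Z ∂μ = 1 := by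
    rw [integral_div, ← hZdef, div_self hZpos.ne']
  have hqstar_pos : ∀ y, 0 < q₀ y * Real.exp (β * f y) / Z := fun y => by
    have := hq₀pos y; positivity
  constructor
  · intro q hqnn hqone hqint hqf hKL
    have key : ∀ y, q y - q₀ y * Real.exp (β * f y) / Z ≤
        q y * Real.log (q y / q₀ y) - β * (q y * f y) + Real.log Z * q y := by
      intro y
      have hp := hqstar_pos y
      have h1 := gibbs_point_ineq (hqnn y) hp
      rcases eq_or_lt_of_le (hqnn y) with h | h
      · rw [← h]; simp <;> linarith
      · have hq0 := hq₀pos y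
        have hrw : q y / (q₀ y * Real.exp (β * f y) / Z)
            = (q y / q₀ y) * (Z / Real.exp (β * f y)) := by
          field_simp
          try ring
        have hlog : Real.log (q y / (q₀ y * Real.exp (β * f y) / Z))
            = Real.log (q y / q₀ y) + (Real.log Z - β * f y) := by
          rw [hrw, Real.log_mul (by positivity) (by positivity),
            Real.log_div hZpos.ne' (Real.exp_ne_zero _), Real.log_exp]
        rw [hlog] at h1
        nlinarith [h1]
    have hlhs_int : Integrable (fun y => q y - q₀ y * Real.exp (β * f y) / Z) μ :=
      hqint.sub hqstar_int
    have hβqf : Integrable (fun y => β * (q y * f y)) μ := hqf.const_mul β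
    have hsub : Integrable (fun y => q y * Real.log (q y / q₀ y) - β * (q y * f y)) μ :=
      hKL.sub hβqf
    have hZq : Integrable (fun y => Real.log Z * q y) μ := hqint.const_mul (Real.log Z)
    have hrhs_int : Integrable (fun y =>
        q y * Real.log (q y / q₀ y) - β * (q y * f y) + Real.log Z * q y) μ :=
      hsub.add hZq
    have hint_le := integral_mono hlhs_int hrhs_int key
    rw [integral_sub hqint hqstar_int, hqone, hqstar_one,
      integral_add hsub hZq, integral_sub hKL hβqf, integral_const_mul,
      integral_const_mul, hqone] at hint_le
    simp only [KLdiv]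
    have hβ' : (0:ℝ) < 1 / β := by positivity
    have hcancel : (1 / β) * β = 1 := one_div_mul_cancel hβ.ne'
    set K := ∫ y, q y * Real.log (q y / q₀ y) ∂μ with hK
    set F := ∫ y, q y * f y ∂μ with hF
    have h2 : β * F ≤ K + Real.log Z := by
      rw [hK, hF]; linarith [hint_le]
    have h3 : (1 / β) * (β * F) ≤ (1 / β) * (K + Real.log Z) :=
      mul_le_mul_of_nonneg_left h2 hβ'.le
    have h4 : (1 / β) * (β * F) = F := by rw [← mul_assoc, hcancel, one_mul]
    have h5 : (1 / β) * (K + Real.log Z) = (1 / β) * K + (1 / β) * Real.log Z := by ring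
    linarith
  · have hpt : ∀ y, (q₀ y * Real.exp (β * f y) / Z) *
        Real.log ((q₀ y * Real.exp (β * f y) / Z) / q₀ y)
        = β * ((q₀ y * Real.exp (β * f y) / Z) * f y)
          - Real.log Z * (q₀ y * Real.exp (β * f y) / Z) := by
      intro y
      have hq0 := hq₀pos y
      have hrw : (q₀ y * Real.exp (β * f y) / Z) / q₀ y
          = Real.exp (β * f y) / Z := by
        field_simp
        try ring
      rw [hrw, Real.log_div (Real.exp_ne_zero _) hZpos.ne', Real.log_exp]
      ring
    have hβstarf : Integrable (fun y => β * ((q₀ y * Real.exp (β * f y) / Z) * f y)) μ :=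
      hstarf.const_mul β
    have hZstar : Integrable (fun y => Real.log Z * (q₀ y * Real.exp (β * f y) / Z)) μ :=
      hqstar_int.const_mul (Real.log Z)
    have hKLstar : KLdiv μ (fun y => q₀ y * Real.exp (β * f y) / Z) q₀
        = β * (∫ y, (q₀ y * Real.exp (β * f y) / Z) * f y ∂μ) - Real.log Z := by
      simp only [KLdiv]
      rw [show (fun y => (q₀ y * Real.exp (β * f y) / Z) *
            Real.log ((q₀ y * Real.exp (β * f y) / Z) / q₀ y))
          = (fun y => β * ((q₀ y * Real.exp (β * f y) / Z) * f y)
            - Real.log Z * (q₀ y * Real.exp (β * f y) / Z)) from funext hpt]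
      rw [integral_sub hβstarf hZstar, integral_const_mul, integral_const_mul,
        hqstar_one, mul_one]
    rw [hKLstar]
    generalize (∫ y, q₀ y * Real.exp (β * f y) / Z * f y ∂μ) = I
    have hcancel : (1 / β) * β = 1 := one_div_mul_cancel hβ.ne'
    have h2 : (1 / β) * (β * I - Real.log Z) = I - (1 / β) * Real.log Z := by
      rw [mul_sub, ← mul_assoc, hcancel, one_mul]
    linarith
end

section
/- First-order expansion of the zero-temperature order parameters near the balanced aspect ratio: writing γ = 1 + ε, the solutions of Φ(α_y) = γ Φ(α_x) and √γ α_x √(q(α_y)) + α_y √(q(α_x)) = 0 satisfy, to first order in ε, α_x = −√(π/8) ε + O(ε²) and α_y = +√(π/8) ε + O(ε²); in particular b₁ − a₁ = √(π/2) and a₁ + b₁ = 0 where a₁, b₁ are the linear coefficients. -/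
/-! Differentiate both defining equations at `ε = 0`, with `a₁ = αx'(0)`, `b₁ = αy'(0)`.
The first gives `φ(0) (b₁ - a₁) = Φ(0) = 1/2`, i.e. `b₁ - a₁ = √(2π)/2 = √(π/2)`.
In the second, each term is a factor continuous at `0` times a function vanishing at `0`,
so its derivative is `√q(0) (a₁ + b₁) = 0`. Continuity of `q` at `0` comes from dominated
convergence, and `q(0) = π` from the half-Gaussian moments `E[Z₊] = 1/√(2π)`,
`E[Z₊²] = 1/2`, both Gamma integrals. -/

open MeasureTheory ProbabilityTheory Real Set

/-- Standard normal density. -/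
noncomputable def gaussPdf (z : ℝ) : ℝ :=
  (Real.sqrt (2 * Real.pi))⁻¹ * Real.exp (-z ^ 2 / 2)

/-- Standard normal CDF. -/
noncomputable def PhiCdf (α : ℝ) : ℝ := ∫ z in Set.Iic α, gaussPdf z

/-- `A(α) = E[(Z+α)₊]` for `Z ~ N(0,1)`. -/
noncomputable def Afun (α : ℝ) : ℝ := ∫ z, max (z + α) 0 ∂(gaussianReal 0 1)

/-- `B(α) = E[(Z+α)₊²]` for `Z ~ N(0,1)`. -/
noncomputable def Bfun (α : ℝ) : ℝ := ∫ z, (max (z + α) 0) ^ 2 ∂(gaussianReal 0 1)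

/-- `q(α) = B(α)/A(α)²`. -/
noncomputable def qfun (α : ℝ) : ℝ := Bfun α / (Afun α) ^ 2

open Filter Topology

lemma gaussPdf_eq_gaussianPDFReal : gaussPdf = gaussianPDFReal 0 1 := by
  ext z
  simp [gaussPdf, gaussianPDFReal]

lemma gaussPdf_zero : gaussPdf 0 = (√(2 * π))⁻¹ := by
  simp [gaussPdf]

lemma gaussPdf_neg (z : ℝ) : gaussPdf (-z) = gaussPdf z := by
  simp [gaussPdf]

lemma continuous_gaussPdf : Continuous gaussPdf := by
  unfold gaussPdf
  fun_prop

lemma integrable_gaussPdf : Integrable gaussPdf := by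
  rw [gaussPdf_eq_gaussianPDFReal]
  exact integrable_gaussianPDFReal 0 1

lemma hasDerivAt_PhiCdf (x : ℝ) : HasDerivAt PhiCdf (gaussPdf x) x := by
  have hPhi : PhiCdf = fun y => (∫ t in (0 : ℝ)..y, gaussPdf t) + PhiCdf 0 := by
    ext y
    rw [PhiCdf, PhiCdf, ← intervalIntegral.integral_Iic_sub_Iic integrable_gaussPdf.integrableOn
      integrable_gaussPdf.integrableOn, sub_add_cancel]
  rw [hPhi]
  exact (intervalIntegral.integral_hasDerivAt_right integrable_gaussPdf.intervalIntegrable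
    (continuous_gaussPdf.stronglyMeasurableAtFilter _ _)
    continuous_gaussPdf.continuousAt).add_const _

lemma PhiCdf_zero : PhiCdf 0 = 1 / 2 := by
  have htotal : PhiCdf 0 + ∫ z in Ioi 0, gaussPdf z = 1 := by
    rw [PhiCdf, intervalIntegral.integral_Iic_add_Ioi integrable_gaussPdf.integrableOn
      integrable_gaussPdf.integrableOn, gaussPdf_eq_gaussianPDFReal,
      integral_gaussianPDFReal_eq_one 0 one_ne_zero]
  have hsymm : ∫ z in Ioi 0, gaussPdf z = PhiCdf 0 := by
    simpa [PhiCdf, gaussPdf_neg] using integral_comp_neg_Ioi 0 gaussPdf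
  linarith

lemma integral_posPart_rpow_gaussianReal {q : ℝ} (hq : -1 < q) (hq0 : q ≠ 0) :
    ∫ z, max z 0 ^ q ∂gaussianReal 0 1 = 2 ^ (q / 2 - 1) * Gamma ((q + 1) / 2) / √π := by
  have hvanish : ∀ z ∉ Ioi (0 : ℝ), gaussianPDFReal 0 1 z • max z 0 ^ q = 0 := fun z hz => by
    rw [max_eq_right (not_lt.mp hz), zero_rpow hq0, smul_zero]
  rw [integral_gaussianReal_eq_integral_smul one_ne_zero,
    ← setIntegral_eq_integral_of_forall_compl_eq_zero hvanish]
  calc ∫ z in Ioi 0, gaussianPDFReal 0 1 z • max z 0 ^ q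
      = ∫ z in Ioi 0, (√(2 * π))⁻¹ * (z ^ q * exp (-(1 / 2) * z ^ (2 : ℝ))) :=
        setIntegral_congr_fun measurableSet_Ioi fun z hz => by
          simp only [gaussianPDFReal, max_eq_left (le_of_lt (mem_Ioi.mp hz)), rpow_two, smul_eq_mul]
          push_cast
          ring_nf
    _ = (√(2 * π))⁻¹ * ((1 / 2) ^ (-(q + 1) / 2) * (1 / 2) * Gamma ((q + 1) / 2)) := by
      rw [integral_const_mul, integral_rpow_mul_exp_neg_mul_rpow two_pos hq (by norm_num)]
    _ = 2 ^ (q / 2 - 1) * Gamma ((q + 1) / 2) / √π := by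
      have hpow : ((1 : ℝ) / 2) ^ (-(q + 1) / 2) = 2 ^ (q / 2 - 1) * 2 * √2 := by
        rw [one_div, inv_rpow zero_le_two, ← rpow_neg zero_le_two, sqrt_eq_rpow,
          show -(-(q + 1) / 2) = q / 2 - 1 + 1 + 1 / 2 by ring, rpow_add two_pos,
          rpow_add two_pos, rpow_one]
      rw [hpow, sqrt_mul zero_le_two]
      field_simp

lemma Afun_zero : Afun 0 = (√(2 * π))⁻¹ := by
  have h := integral_posPart_rpow_gaussianReal (q := 1) (by norm_num) one_ne_zero
  simp only [rpow_one] at h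
  simp only [Afun, add_zero]
  rw [h, show (1 : ℝ) / 2 - 1 = -(1 / 2) by norm_num, rpow_neg zero_le_two, ← sqrt_eq_rpow,
    show ((1 : ℝ) + 1) / 2 = 1 by norm_num, Gamma_one, sqrt_mul zero_le_two]
  field_simp

lemma Bfun_zero : Bfun 0 = 1 / 2 := by
  have h := integral_posPart_rpow_gaussianReal (q := 2) (by norm_num) two_ne_zero
  simp only [rpow_two] at h
  simp only [Bfun, add_zero]
  rw [h, show (2 : ℝ) / 2 - 1 = 0 by norm_num, rpow_zero,
    show ((2 : ℝ) + 1) / 2 = 1 / 2 + 1 by norm_num, Gamma_add_one (by norm_num), Gamma_one_half_eq]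
  field_simp

lemma qfun_zero : qfun 0 = π := by
  rw [qfun, Afun_zero, Bfun_zero, inv_pow, sq_sqrt (by positivity)]
  field_simp

lemma continuous_integral_posPart_add_pow {ν : Measure ℝ} [IsFiniteMeasure ν] {n : ℕ}
    (hmom : MemLp id n ν) : Continuous fun α => ∫ z, max (z + α) 0 ^ n ∂ν := by
  refine continuous_iff_continuousAt.mpr fun α₀ => ?_
  set c := |α₀| + 1
  have hc : 0 ≤ c := by positivity
  have hbound : Integrable (fun z => (|z| + c) ^ n) ν := by
    have hmem : MemLp (fun z => |z| + c) n ν := hmom.abs.add (memLp_const c)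
    simpa [Real.norm_eq_abs, abs_of_nonneg (add_nonneg (abs_nonneg _) hc)]
      using hmem.integrable_norm_pow'
  refine continuousAt_of_dominated (Eventually.of_forall fun α => by fun_prop) ?_ hbound
    (ae_of_all _ fun z => by fun_prop)
  filter_upwards [Metric.ball_mem_nhds α₀ one_pos] with α hα
  refine ae_of_all _ fun z => ?_
  have hαc : |α| ≤ c := by
    have := abs_sub_abs_le_abs_sub α α₀
    rw [Metric.mem_ball, Real.dist_eq] at hα
    linarith
  have hmax : |max (z + α) 0| ≤ |z| + c := by
    rw [abs_of_nonneg (le_max_right _ _)]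
    exact max_le ((le_abs_self _).trans ((abs_add_le z α).trans (by linarith)))
      (by positivity)
  rw [norm_pow, Real.norm_eq_abs]
  exact pow_le_pow_left₀ (abs_nonneg _) hmax n

lemma continuous_Afun : Continuous Afun :=
  (continuous_integral_posPart_add_pow (ν := gaussianReal 0 1) (n := 1)
    (memLp_id_gaussianReal' _ (ENNReal.natCast_ne_top 1))).congr fun α => by simp [Afun]

lemma continuous_Bfun : Continuous Bfun :=
  continuous_integral_posPart_add_pow (n := 2) (memLp_id_gaussianReal' _ (ENNReal.natCast_ne_top 2))

lemma continuousAt_qfun_zero : ContinuousAt qfun 0 :=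
  continuous_Bfun.continuousAt.div (continuous_Afun.continuousAt.pow 2)
    (by rw [Afun_zero]; positivity)

lemma HasDerivAt.mul_of_apply_eq_zero {𝕜 : Type*} [NontriviallyNormedField 𝕜] {u f : 𝕜 → 𝕜}
    {f' x : 𝕜} (hf : HasDerivAt f f' x) (hfx : f x = 0) (hu : ContinuousAt u x) :
    HasDerivAt (fun y => u y * f y) (u x * f') x := by
  -- since `f x = 0`, the slope of `u * f` at `x` is `u` times the slope of `f`
  rw [hasDerivAt_iff_tendsto_slope] at hf ⊢
  refine ((hu.tendsto.mono_left nhdsWithin_le_nhds).mul hf).congr fun y => ?_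
  simp only [slope_def_field, hfx, mul_zero, sub_zero, mul_div_assoc]

lemma sub_eq_sqrt_pi_div_two_of_PhiCdf_eq {f g : ℝ → ℝ} {a b : ℝ} (hf : HasDerivAt f a 0)
    (hg : HasDerivAt g b 0) (hf0 : f 0 = 0) (hg0 : g 0 = 0)
    (h : ∀ᶠ ε in 𝓝 0, PhiCdf (g ε) = (1 + ε) * PhiCdf (f ε)) :
    b - a = √(π / 2) := by
  have hΦf : HasDerivAt (fun ε => PhiCdf (f ε)) (gaussPdf 0 * a) 0 :=
    (hasDerivAt_PhiCdf 0).comp_of_eq 0 hf hf0.symm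
  have hΦg : HasDerivAt (fun ε => PhiCdf (g ε)) (gaussPdf 0 * b) 0 :=
    (hasDerivAt_PhiCdf 0).comp_of_eq 0 hg hg0.symm
  have hderiv := hΦg.sub (((hasDerivAt_id' 0).const_add 1).mul hΦf)
  have hzero : gaussPdf 0 * b - (1 * PhiCdf (f 0) + (1 + 0) * (gaussPdf 0 * a)) = 0 :=
    (hderiv.congr_of_eventuallyEq (h.mono fun ε hε => by simp [hε])).unique
      (hasDerivAt_const 0 0)
  rw [hf0, PhiCdf_zero, gaussPdf_zero] at hzero
  have hsqrt : √(π / 2) = √(2 * π) / 2 := by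
    rw [show π / 2 = 2 * π / 2 ^ 2 by ring, sqrt_div' _ (sq_nonneg 2), sqrt_sq zero_le_two]
  rw [hsqrt]
  field_simp at hzero ⊢
  linarith

lemma add_eq_zero_of_sqrt_qfun_balance {f g : ℝ → ℝ} {a b : ℝ} (hf : HasDerivAt f a 0)
    (hg : HasDerivAt g b 0) (hf0 : f 0 = 0) (hg0 : g 0 = 0)
    (h : ∀ᶠ ε in 𝓝 0, √(1 + ε) * f ε * √(qfun (g ε)) + g ε * √(qfun (f ε)) = 0) :
    a + b = 0 := by
  have hq {k : ℝ → ℝ} (hk0 : k 0 = 0) (hk : ContinuousAt k 0) :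
      ContinuousAt (fun ε => √(qfun (k ε))) 0 :=
    (continuousAt_qfun_zero.comp_of_eq hk hk0).sqrt
  have hu : ContinuousAt (fun ε => √(1 + ε) * √(qfun (g ε))) 0 :=
    (by fun_prop : ContinuousAt (fun ε : ℝ => √(1 + ε)) 0).mul (hq hg0 hg.continuousAt)
  have hderiv := (hf.mul_of_apply_eq_zero hf0 hu).add
    (hg.mul_of_apply_eq_zero hg0 (hq hf0 hf.continuousAt))
  have hzero := (hderiv.congr_of_eventuallyEq (h.mono fun ε hε => by
    simp only [Pi.add_apply]
    linear_combination -hε)).unique (hasDerivAt_const 0 0)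
  simp only [add_zero, sqrt_one, one_mul, hf0, hg0, qfun_zero] at hzero
  have hπ : √π * (a + b) = 0 := by linear_combination hzero
  exact (mul_eq_zero.mp hπ).resolve_left (by positivity)

/-- First-order expansion of the zero-temperature order parameters near the
balanced aspect ratio `γ = 1 + ε`: differentiable solution branches
`(α_x(ε), α_y(ε))` of the saddle system with `α_x(0) = α_y(0) = 0` have linear
coefficients `a₁ = −√(π/8)`, `b₁ = √(π/8)`; in particular `b₁ − a₁ = √(π/2)`
and `a₁ + b₁ = 0`. -/
theorem first_order_expansion_balanced
    (δ : ℝ) (hδ : 0 < δ)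
    (αx αy : ℝ → ℝ)
    (hsys : ∀ ε ∈ Ioo (-δ) δ,
      PhiCdf (αy ε) = (1 + ε) * PhiCdf (αx ε) ∧
      Real.sqrt (1 + ε) * αx ε * Real.sqrt (qfun (αy ε))
        + αy ε * Real.sqrt (qfun (αx ε)) = 0)
    (hx0 : αx 0 = 0) (hy0 : αy 0 = 0)
    (hdx : DifferentiableAt ℝ αx 0) (hdy : DifferentiableAt ℝ αy 0) :
    deriv αx 0 = -Real.sqrt (Real.pi / 8)
    ∧ deriv αy 0 = Real.sqrt (Real.pi / 8)
    ∧ deriv αy 0 - deriv αx 0 = Real.sqrt (Real.pi / 2)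
    ∧ deriv αx 0 + deriv αy 0 = 0 := by
  have hnear : ∀ᶠ ε in 𝓝 (0 : ℝ), ε ∈ Ioo (-δ) δ := Ioo_mem_nhds (neg_neg_iff_pos.mpr hδ) hδ
  have hdiff := sub_eq_sqrt_pi_div_two_of_PhiCdf_eq hdx.hasDerivAt hdy.hasDerivAt hx0 hy0
    (hnear.mono fun ε hε => (hsys ε hε).1)
  have hsum := add_eq_zero_of_sqrt_qfun_balance hdx.hasDerivAt hdy.hasDerivAt hx0 hy0
    (hnear.mono fun ε hε => (hsys ε hε).2)
  have hhalf : √(π / 2) = 2 * √(π / 8) := by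
    rw [show π / 2 = 2 ^ 2 * (π / 8) by ring, sqrt_mul (sq_nonneg 2), sqrt_sq zero_le_two]
  exact ⟨by linarith, by linarith, hdiff, hsum⟩
end
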